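/- Let g be a k-glue function whose bond graph is bipartite with parts V_1 = {1,…,k′} and V_2 = {k′+1,…,k} (so g(i,j) ≤ 0 whenever i, j are both in V_1 or both in V_2), and let m = k − k′ ≥ 1. Define α(n) = ⋄1 for n ≤ 0 and α(n) = 1⋄ for n > 0; for a ∈ V_1 let M_a = α(g(a, k′+1)) α(g(a, k′+2)) ⋯ α(g(a, k)). Define W_a = ⋄^{k+5} 1 1 M_a 1 ⋄^{k+6} for a ∈ V_1, and, for b ∈ V_2 with c = b − k′, W_b = 1^{k+6} 0 (⋄⋄)^{m−c} (1⋄) (⋄⋄)^{c−1} ⋄ ⋄ 1^{k+5}. Then for all a ∈ V_1 and b ∈ V_2, f(W_a, Rev(W_b)) = 1 if g(a,b) > 0, and f(W_a, Rev(W_b)) = 0 otherwise. -/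

import Mathlib

/-- The alphabet Σ = {0, 1, ⋄} of dipole letters. -/
inductive Dip : Type
  | zero : Dip
  | one : Dip
  | blank : Dip
  deriving DecidableEq

open Dip

/-- The force between a pair of letters: 1 if {x,y} = {0,1}, -1 if x = y ∈ {0,1}, 0 otherwise. -/
def lf : Dip → Dip → ℤ
  | zero, one => 1
  | one, zero => 1
  | zero, zero => -1
  | one, one => -1
  | _, _ => 0

/-- The force between a pair of equal-length words: the sum of letterwise forces. -/
def force (X Y : List Dip) : ℤ := (List.zipWith lf X Y).sum

/-- `n` repetitions of a letter. -/
def rep (n : ℕ) (x : Dip) : List Dip := List.replicate n x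

/-- `n` repetitions of a word. -/
def rep2 (n : ℕ) (p : List Dip) : List Dip := (List.replicate n p).flatten

/-- `α(n) = ⋄1` for `n ≤ 0` and `α(n) = 1⋄` for `n > 0`. -/
def alphamap (n : ℤ) : List Dip := if n ≤ 0 then [blank, one] else [one, blank]

/-- `M_a = α(g(a, k'+1)) α(g(a, k'+2)) ⋯ α(g(a, k))`. -/
def Mword (g : ℕ → ℕ → ℤ) (k' k a : ℕ) : List Dip :=
  ((List.range (k - k')).map fun t => alphamap (g a (k' + 1 + t))).flatten

/-- `W_a = ⋄^{k+5} 1 1 M_a 1 ⋄^{k+6}` for `a ∈ V₁`. -/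
def WA (g : ℕ → ℕ → ℤ) (k' k a : ℕ) : List Dip :=
  rep (k + 5) blank ++ [one, one] ++ Mword g k' k a ++ [one] ++ rep (k + 6) blank

/-- `W_b = 1^{k+6} 0 (⋄⋄)^{m-c} (1⋄) (⋄⋄)^{c-1} ⋄ ⋄ 1^{k+5}` for `b ∈ V₂`, `c = b - k'`. -/
def WB (k' k b : ℕ) : List Dip :=
  rep (k + 6) one ++ [zero] ++ rep2 (k - b) [blank, blank] ++ [one, blank] ++
    rep2 (b - k' - 1) [blank, blank] ++ [blank, blank] ++ rep (k + 5) one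

/-! Aligning `W_a` with `Rev(W_b)`, a letter of `W_a` other than `⋄` faces a letter other than `⋄`
only twice: the second letter of `α(g(a,b))` faces the lone middle `1` of `Rev(W_b)`, and the last
`1` of `W_a` faces the `0`. So the force is `1`, minus `1` exactly when `α(g(a,b)) = ⋄1`. -/

@[simp] lemma lf_blank_left (y : Dip) : lf blank y = 0 := by cases y <;> rfl

@[simp] lemma lf_blank_right (x : Dip) : lf x blank = 0 := by cases x <;> rfl

lemma force_append {X₁ X₂ Y₁ Y₂ : List Dip} (h : X₁.length = Y₁.length) :
    force (X₁ ++ X₂) (Y₁ ++ Y₂) = force X₁ Y₁ + force X₂ Y₂ := by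
  simp [force, List.zipWith_append h]

lemma force_rep_blank_left (n : ℕ) (Y : List Dip) : force (rep n blank) Y = 0 := by
  induction n generalizing Y with
  | zero => rfl
  | succ n ih => cases Y <;> simp_all [force, rep, List.replicate_succ]

lemma force_rep_blank_right (n : ℕ) (X : List Dip) : force X (rep n blank) = 0 := by
  induction n generalizing X with
  | zero => simp [force, rep]
  | succ n ih => cases X <;> simp_all [force, rep, List.replicate_succ]

lemma length_alphamap (n : ℤ) : (alphamap n).length = 2 := by
  unfold alphamap; split <;> rfl

lemma length_flatten_map_alphamap {ι : Type*} (l : List ι) (h : ι → ℤ) :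
    (l.map fun t => alphamap (h t)).flatten.length = 2 * l.length := by
  induction l with
  | nil => rfl
  | cons t l ih => simp [ih, length_alphamap]; ring

lemma rep2_blank (n : ℕ) : rep2 n [blank, blank] = rep (2 * n) blank := by
  rw [rep2, rep, List.eq_replicate_iff]
  constructor
  · simp [mul_comm]
  · simp +contextual [List.mem_flatten]

lemma Mword_eq_append {k' k b : ℕ} (hb : k' < b) (hbk : b ≤ k) (g : ℕ → ℕ → ℤ) (a : ℕ) :
    ∃ M₁ M₂ : List Dip, M₁.length = 2 * (b - k' - 1) ∧ M₂.length = 2 * (k - b) ∧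
      Mword g k' k a = M₁ ++ alphamap (g a b) ++ M₂ := by
  obtain ⟨c, rfl⟩ : ∃ c, b = k' + 1 + c := ⟨b - k' - 1, by omega⟩
  refine ⟨((List.range c).map fun t => alphamap (g a (k' + 1 + t))).flatten,
    ((List.range (k - (k' + 1 + c))).map fun t => alphamap (g a (k' + 1 + (c + 1 + t)))).flatten,
    by rw [length_flatten_map_alphamap, List.length_range]; omega,
    by rw [length_flatten_map_alphamap, List.length_range], ?_⟩
  rw [Mword, show k - k' = c + 1 + (k - (k' + 1 + c)) by omega, List.range_add, List.range_succ]
  simp [Function.comp_def, add_assoc]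

lemma WB_reverse (k' k b : ℕ) :
    (WB k' k b).reverse = rep (k + 5) one ++ [blank, blank] ++ rep (2 * (b - k' - 1)) blank ++
      [blank, one] ++ rep (2 * (k - b)) blank ++ [zero] ++ rep (k + 6) one := by
  simp [WB, rep2_blank, rep, List.reverse_replicate]

lemma force_aligned_blocks {n p q r : ℕ} {M₁ A M₂ : List Dip}
    (h₁ : M₁.length = p) (hA : A.length = 2) (h₂ : M₂.length = q) :
    force (rep n blank ++ [one, one] ++ M₁ ++ A ++ M₂ ++ [one] ++ rep r blank)
      (rep n one ++ [blank, blank] ++ rep p blank ++ [blank, one] ++ rep q blank ++ [zero] ++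
        rep r one) = force A [blank, one] + 1 := by
  simp only [List.append_assoc]
  rw [force_append (by simp [rep]), force_append (by simp), force_append (by simp [rep, h₁]),
    force_append (by simp [hA]), force_append (by simp [rep, h₂]), force_append (by simp),
    force_rep_blank_left, force_rep_blank_right, force_rep_blank_right, force_rep_blank_left]
  simp [force, lf]

lemma force_alphamap_blank_one (n : ℤ) :
    force (alphamap n) [blank, one] + 1 = if 0 < n then 1 else 0 := by
  by_cases hn : 0 < n
  · simp [alphamap, hn, force, lf, not_le.mpr hn]
  · simp [alphamap, hn, force, lf, not_lt.mp hn]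

theorem stmt12_general (k k' : ℕ) (g : ℕ → ℕ → ℤ) :
    ∀ a ∈ Finset.Icc 1 k', ∀ b ∈ Finset.Icc (k' + 1) k,
      force (WA g k' k a) ((WB k' k b).reverse) = if 0 < g a b then 1 else 0 := by
  intro a _ b hb
  rw [Finset.mem_Icc] at hb
  obtain ⟨M₁, M₂, h₁, h₂, hM⟩ := Mword_eq_append (by omega : k' < b) hb.2 g a
  rw [WA, hM, WB_reverse, ← force_alphamap_blank_one]
  simpa only [List.append_assoc] using
    force_aligned_blocks (n := k + 5) (r := k + 6) h₁ (length_alphamap _) h₂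

/-- Forces between the two sides of the bipartite construction: `f(W_a, Rev(W_b)) = 1`
if `g a b > 0` and `0` otherwise. -/
theorem stmt12 (k k' : ℕ) (hm : 1 ≤ k - k') (g : ℕ → ℕ → ℤ)
    (hsym : ∀ i ∈ Finset.Icc 1 k, ∀ j ∈ Finset.Icc 1 k, g i j = g j i)
    (hbip : ∀ i ∈ Finset.Icc 1 k, ∀ j ∈ Finset.Icc 1 k,
      ((i ≤ k' ∧ j ≤ k') ∨ (k' < i ∧ k' < j)) → g i j ≤ 0) :
    ∀ a ∈ Finset.Icc 1 k', ∀ b ∈ Finset.Icc (k' + 1) k,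
      force (WA g k' k a) ((WB k' k b).reverse) = if 0 < g a b then 1 else 0 :=
  stmt12_general k k' g
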